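/- If ν ∈ 𝒫(ℝ) is Ahlfors α-regular with constant C ≥ 1 and α ∈ (0,1), then supp ν is dyadic k-porous for k = ⌈(3 + 2 log₂ C)/(1 − α)⌉. -/
import Mathlib


open MeasureTheory Filter Set Metric

/-- Topological support of a measure on ℝ. -/
noncomputable def mSupp (μ : Measure ℝ) : Set ℝ := {x | ∀ r > 0, 0 < μ (ball x r)}

/-- A compactly supported Borel probability measure on ℝ (an element of 𝒫(ℝ)). -/
def IsCptProb (μ : Measure ℝ) : Prop :=
  IsProbabilityMeasure μ ∧ ∃ K : Set ℝ, IsCompact K ∧ μ Kᶜ = 0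

/-- ν is Ahlfors α-regular with constant C:
C⁻¹ r^α ≤ ν(B(x,r)) ≤ C r^α for all x ∈ supp ν and r ∈ (0,1). -/
def Ahlfors (ν : Measure ℝ) (α C : ℝ) : Prop :=
  ∀ x ∈ mSupp ν, ∀ r : ℝ, 0 < r → r < 1 →
    ENNReal.ofReal (C⁻¹ * r ^ α) ≤ ν (ball x r) ∧ ν (ball x r) ≤ ENNReal.ofReal (C * r ^ α)

/-- A ⊆ ℝ is dyadic k-porous: for every n and every level-n dyadic interval J there is a
level-(n+k) dyadic interval I ⊆ J with I ∩ A = ∅. -/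
def DyadicPorous (A : Set ℝ) (k : ℕ) : Prop :=
  ∀ n : ℕ, ∀ j : ℤ, ∃ i : ℤ,
    Ico ((i : ℝ) / 2 ^ (n + k)) (((i : ℝ) + 1) / 2 ^ (n + k)) ⊆
      Ico ((j : ℝ) / 2 ^ n) (((j : ℝ) + 1) / 2 ^ n) ∧
    Ico ((i : ℝ) / 2 ^ (n + k)) (((i : ℝ) + 1) / 2 ^ (n + k)) ∩ A = ∅

lemma key_exp (α C : ℝ) (hα0 : 0 < α) (hα1 : α < 1) (hC : 1 ≤ C) :
    8 * C ^ 2 ≤ (2:ℝ) ^ ((⌈(3 + 2 * Real.logb 2 C) / (1 - α)⌉₊ : ℝ) * (1 - α)) := by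
  set k := ⌈(3 + 2 * Real.logb 2 C) / (1 - α)⌉₊
  have h1 : (0:ℝ) < 1 - α := by linarith
  have hlog : 0 ≤ Real.logb 2 C := Real.logb_nonneg one_lt_two hC
  have hle : (3 + 2 * Real.logb 2 C) / (1 - α) ≤ (k : ℝ) := Nat.le_ceil _
  have h2 : 3 + 2 * Real.logb 2 C ≤ (k:ℝ) * (1 - α) := by
    rw [div_le_iff₀ h1] at hle; linarith
  calc 8 * C ^ 2 = (2:ℝ) ^ (3 + 2 * Real.logb 2 C) := by
        rw [Real.rpow_add two_pos, mul_comm (2:ℝ) (Real.logb 2 C),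
          Real.rpow_mul (by norm_num), Real.rpow_logb two_pos (by norm_num) (by linarith),
          Real.rpow_two]
        norm_num
    _ ≤ _ := Real.rpow_le_rpow_of_exponent_le one_le_two h2

set_option maxHeartbeats 1000000 in
/-- Lemma 4.2: if ν ∈ 𝒫(ℝ) is Ahlfors α-regular with constant C ≥ 1 and
α ∈ (0,1), then supp ν is dyadic k-porous for k = ⌈(3 + 2 log₂ C)/(1 − α)⌉. -/
theorem ahlfors_is_porous (ν : Measure ℝ) (hν : IsCptProb ν) (α C : ℝ)
    (hα0 : 0 < α) (hα1 : α < 1) (hC : 1 ≤ C) (h : Ahlfors ν α C) :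
    DyadicPorous (mSupp ν) ⌈(3 + 2 * Real.logb 2 C) / (1 - α)⌉₊ := by
  have hC0 : (0:ℝ) < C := by linarith
  set k := ⌈(3 + 2 * Real.logb 2 C) / (1 - α)⌉₊ with hkdef
  have hk1 : 1 ≤ k := by
    rw [hkdef]
    refine Nat.one_le_ceil_iff.mpr ?_
    have hlog : 0 ≤ Real.logb 2 C := Real.logb_nonneg one_lt_two hC
    apply div_pos (by linarith) (by linarith)
  intro n j
  by_contra hcon
  push_neg at hcon
  -- notation
  set D : ℝ := 2 ^ (n + k) with hDdef
  have hD : (0:ℝ) < D := by positivity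
  have hDn : (0:ℝ) < (2:ℝ) ^ n := by positivity
  set M : ℕ := (2 ^ k + 2) / 3 with hMdef
  have hM3 : 2 ^ k ≤ 3 * M ∧ ∀ m : ℕ, m < M → 3 * m + 1 ≤ 2 ^ k := by
    constructor
    · have := Nat.div_add_mod (2 ^ k + 2) 3
      have h2 : (2 ^ k + 2) % 3 < 3 := Nat.mod_lt _ (by norm_num)
      omega
    · intro m hm
      have : (m + 1) * 3 ≤ 2 ^ k + 2 := by
        have := (Nat.le_div_iff_mul_le (by norm_num : 0 < 3)).mp hm
        omega
      omega
  have hM0 : 0 < M := by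
    have : 3 ≤ 2 ^ k + 2 := by have := Nat.one_le_two_pow (n := k); omega
    rw [hMdef]; omega
  -- for each m < M there's a point of the support in the m-th chosen subinterval
  have hpt : ∀ m : ℕ, ∃ x : ℝ, m < M →
      x ∈ Ico (((2 ^ k * j + 3 * m : ℤ) : ℝ) / D) ((((2 ^ k * j + 3 * m : ℤ) : ℝ) + 1) / D) ∧
      x ∈ mSupp ν := by
    intro m
    by_cases hm : m < M
    · have hm2 : (3 * m + 1 : ℕ) ≤ 2 ^ k := hM3.2 m hm
      have hsub : Ico (((2 ^ k * j + 3 * m : ℤ) : ℝ) / D) ((((2 ^ k * j + 3 * m : ℤ) : ℝ) + 1) / D)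
          ⊆ Ico ((j : ℝ) / 2 ^ n) (((j : ℝ) + 1) / 2 ^ n) := by
        apply Ico_subset_Ico
        · rw [div_le_div_iff₀ hDn hD, hDdef, pow_add]
          push_cast
          have : (0:ℝ) ≤ 3 * m := by positivity
          nlinarith [hDn]
        · rw [div_le_div_iff₀ hD hDn, hDdef, pow_add]
          have : (3 * m + 1 : ℝ) ≤ 2 ^ k := by exact_mod_cast hm2
          push_cast
          nlinarith [hDn]
      obtain ⟨x, hx1, hx2⟩ := hcon (2 ^ k * j + 3 * m) hsub
      exact ⟨x, fun _ => ⟨hx1, hx2⟩⟩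
    · exact ⟨0, fun h' => absurd h' hm⟩
  choose x hx using hpt
  -- basic quantities
  set h0 : ℝ := D⁻¹ with hh0def
  have hh0pos : 0 < h0 := by positivity
  set H : ℝ := ((2:ℝ) ^ n)⁻¹ with hHdef
  have hHpos : 0 < H := by positivity
  have hkH : (2:ℝ) ^ k * h0 = H := by
    rw [hh0def, hHdef, hDdef, pow_add]
    field_simp
  have hh0H : h0 ≤ H := by
    rw [hh0def, hHdef, hDdef]
    have h2 : (2:ℝ) ^ n ≤ 2 ^ (n + k) := pow_le_pow_right₀ one_le_two (by omega)
    exact inv_anti₀ hDn h2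
  set a : ℝ := ((2:ℝ) ^ k * (j:ℝ)) * h0 with hadef
  -- location of the chosen points
  have hxb : ∀ m : ℕ, m < M → a + 3 * m * h0 ≤ x m ∧ x m < a + 3 * m * h0 + h0 := by
    intro m hm
    obtain ⟨⟨hl, hr⟩, -⟩ := hx m hm
    have e1 : a + 3 * (m:ℝ) * h0 = ((2 ^ k * j + 3 * m : ℤ) : ℝ) / D := by
      rw [hadef, hh0def]
      push_cast
      field_simp
    have e2 : a + 3 * (m:ℝ) * h0 + h0 = (((2 ^ k * j + 3 * m : ℤ) : ℝ) + 1) / D := by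
      rw [hadef, hh0def]
      push_cast
      field_simp
    exact ⟨by linarith, by linarith⟩
  have hxS : ∀ m : ℕ, m < M → x m ∈ mSupp ν := fun m hm => (hx m hm).2
  -- the balls
  set B : ℕ → Set ℝ := fun m => ball (x m) h0 with hBdef
  have hdisj : (↑(Finset.range M) : Set ℕ).PairwiseDisjoint B := by
    intro m hm m' hm' hne
    simp only [Finset.coe_range, Set.mem_Iio] at hm hm'
    have key : ∀ p q : ℕ, p < M → q < M → p < q → Disjoint (B p) (B q) := by
      intro p q hp hq hpq
      apply ball_disjoint_ball
      obtain ⟨hp1, hp2⟩ := hxb p hp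
      obtain ⟨hq1, hq2⟩ := hxb q hq
      rw [Real.dist_eq, abs_sub_comm, abs_of_nonneg (by
        have : (p:ℝ) + 1 ≤ (q:ℝ) := by exact_mod_cast hpq
        nlinarith)]
      have : (p:ℝ) + 1 ≤ (q:ℝ) := by exact_mod_cast hpq
      nlinarith
    rcases lt_or_gt_of_ne hne with h' | h'
    · exact key m m' hm hm' h'
    · exact (key m' m hm' hm h').symm
  have hsum : ν (⋃ m ∈ Finset.range M, B m) = ∑ m ∈ Finset.range M, ν (B m) :=
    measure_biUnion_finset hdisj (fun m _ => measurableSet_ball)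
  -- all balls sit inside one big ball centered at a support point
  set y : ℝ := x 0 with hydef
  have hyS : y ∈ mSupp ν := hxS 0 hM0
  have hbig : ∀ m ∈ Finset.range M, B m ⊆ ball y (2 * H) := by
    intro m hm
    rw [Finset.mem_range] at hm
    apply ball_subset_ball'
    obtain ⟨hm1, hm2⟩ := hxb m hm
    obtain ⟨h01, h02⟩ := hxb 0 hM0
    have hm3 : (3 * (m:ℝ) + 1) * h0 ≤ 2 ^ k * h0 := by
      have : (3 * m + 1 : ℕ) ≤ 2 ^ k := hM3.2 m hm
      have h' : (3 * (m:ℝ) + 1) ≤ 2 ^ k := by exact_mod_cast this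
      nlinarith
    rw [Real.dist_eq]
    have habs : |x m - y| ≤ 2 * H - h0 := by
      rw [abs_le]
      rw [← hydef] at h01 h02
      norm_num at h01 h02
      constructor <;> nlinarith [hkH, hh0H]
    linarith
  -- lower bound for each small ball
  have h0lt1 : h0 < 1 := by
    rw [hh0def, hDdef]
    rw [inv_lt_one_iff₀]
    right
    have : (2:ℝ) ^ 0 < (2:ℝ) ^ (n + k) := by
      apply pow_lt_pow_right₀ one_lt_two; omega
    simpa using this
  have hlow : ∀ m ∈ Finset.range M, ENNReal.ofReal (C⁻¹ * h0 ^ α) ≤ ν (B m) := by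
    intro m hm
    rw [Finset.mem_range] at hm
    exact (h (x m) (hxS m hm) h0 hh0pos h0lt1).1
  -- upper bound for the big ball
  haveI : IsProbabilityMeasure ν := hν.1
  have hrBig : (0:ℝ) < 2 * H := by positivity
  have hup : ν (ball y (2 * H)) ≤ ENNReal.ofReal (C * (2 * H) ^ α) := by
    by_cases hn : 2 ≤ n
    · have hlt1 : 2 * H < 1 := by
        rw [hHdef]
        rw [mul_inv_lt_iff₀ (by positivity)]
        have : (2:ℝ) ^ 2 ≤ (2:ℝ) ^ n := pow_le_pow_right₀ one_le_two hn
        nlinarith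
      exact (h y hyS (2 * H) hrBig hlt1).2
    · have h1le : (1:ℝ) ≤ 2 * H := by
        rw [hHdef]
        rw [le_mul_inv_iff₀ (by positivity)]
        have : (2:ℝ) ^ n ≤ (2:ℝ) ^ 1 := pow_le_pow_right₀ one_le_two (by omega)
        nlinarith
      calc ν (ball y (2 * H)) ≤ 1 := prob_le_one
        _ ≤ ENNReal.ofReal (C * (2 * H) ^ α) := by
            rw [ENNReal.one_le_ofReal]
            have : (1:ℝ) ≤ (2 * H) ^ α := Real.one_le_rpow h1le (le_of_lt hα0)
            nlinarith
  -- combine in ENNReal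
  have hchain : (M : ENNReal) * ENNReal.ofReal (C⁻¹ * h0 ^ α) ≤ ENNReal.ofReal (C * (2 * H) ^ α) := by
    calc (M : ENNReal) * ENNReal.ofReal (C⁻¹ * h0 ^ α)
        = (Finset.range M).card • ENNReal.ofReal (C⁻¹ * h0 ^ α) := by
          rw [Finset.card_range, nsmul_eq_mul]
      _ ≤ ∑ m ∈ Finset.range M, ν (B m) := Finset.card_nsmul_le_sum _ _ _ hlow
      _ = ν (⋃ m ∈ Finset.range M, B m) := hsum.symm
      _ ≤ ν (ball y (2 * H)) := measure_mono (Set.iUnion₂_subset hbig)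
      _ ≤ _ := hup
  have hreal : (M : ℝ) * (C⁻¹ * h0 ^ α) ≤ C * (2 * H) ^ α := by
    have hnn : (0:ℝ) ≤ C⁻¹ * h0 ^ α := by positivity
    rw [← ENNReal.ofReal_natCast M, ← ENNReal.ofReal_mul (by positivity)] at hchain
    exact (ENNReal.ofReal_le_ofReal_iff (by positivity)).mp hchain
  -- final real arithmetic
  have hQ : (0:ℝ) < (2 * H) ^ α := by positivity
  have hh0pow : (0:ℝ) < h0 ^ α := by positivity
  have h2k3M : ((2:ℝ) ^ k) ≤ 3 * M := by exact_mod_cast hM3.1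
  have hP : (2:ℝ) ^ k * (C⁻¹ * h0 ^ α) ≤ 3 * (C * (2 * H) ^ α) := by
    calc (2:ℝ) ^ k * (C⁻¹ * h0 ^ α) ≤ (3 * M) * (C⁻¹ * h0 ^ α) :=
          mul_le_mul_of_nonneg_right h2k3M (by positivity)
      _ ≤ 3 * (C * (2 * H) ^ α) := by nlinarith
  have hkey : (2:ℝ) ^ k * h0 ^ α ≤ 3 * C ^ 2 * (2 * H) ^ α := by
    have := mul_le_mul_of_nonneg_left hP (le_of_lt hC0)
    have hCC : C * ((2:ℝ) ^ k * (C⁻¹ * h0 ^ α)) = 2 ^ k * h0 ^ α := by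
      field_simp
    nlinarith
  -- rewrite everything as rpow of 2
  have hh0r : h0 = (2:ℝ) ^ (-((n:ℝ) + (k:ℝ))) := by
    rw [hh0def, hDdef, ← Real.rpow_natCast 2 (n + k), ← Real.rpow_neg (by norm_num)]
    push_cast; ring_nf
  have hHr : 2 * H = (2:ℝ) ^ ((1:ℝ) - (n:ℝ)) := by
    rw [hHdef, ← Real.rpow_natCast 2 n, ← Real.rpow_neg (by norm_num),
      Real.rpow_sub two_pos, Real.rpow_one, Real.rpow_neg (by norm_num)]
    ring
  have hh0ra : h0 ^ α = (2:ℝ) ^ ((-((n:ℝ) + (k:ℝ))) * α) := by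
    rw [hh0r, ← Real.rpow_mul (by norm_num)]
  have hHra : (2 * H) ^ α = (2:ℝ) ^ (((1:ℝ) - (n:ℝ)) * α) := by
    rw [hHr, ← Real.rpow_mul (by norm_num)]
  have h2kr : ((2:ℝ) ^ k) = (2:ℝ) ^ ((k:ℝ)) := by
    rw [Real.rpow_natCast]
  have hEα : (2:ℝ) ^ α ≤ 2 := by
    have := Real.rpow_le_rpow_of_exponent_le one_le_two (le_of_lt hα1)
    rwa [Real.rpow_one] at this
  have heq1 : (2:ℝ) ^ ((k:ℝ) * (1 - α)) * ((2 * H) ^ α)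
      = ((2:ℝ) ^ ((k:ℝ)) * h0 ^ α) * (2:ℝ) ^ α := by
    rw [hHra, hh0ra, ← Real.rpow_add two_pos, ← Real.rpow_add two_pos, ← Real.rpow_add two_pos]
    congr 1
    ring
  have hfin : (2:ℝ) ^ ((k:ℝ) * (1 - α)) * ((2 * H) ^ α) ≤ (6 * C ^ 2) * ((2 * H) ^ α) := by
    rw [heq1, ← h2kr]
    calc ((2:ℝ) ^ k * h0 ^ α) * (2:ℝ) ^ α ≤ (3 * C ^ 2 * (2 * H) ^ α) * 2 := by
          apply mul_le_mul hkey hEα (by positivity) (by positivity)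
      _ = (6 * C ^ 2) * ((2 * H) ^ α) := by ring
  have hfin2 : (2:ℝ) ^ ((k:ℝ) * (1 - α)) ≤ 6 * C ^ 2 :=
    le_of_mul_le_mul_right hfin hQ
  have hkexp := key_exp α C hα0 hα1 hC
  rw [← hkdef] at hkexp
  nlinarith [hkexp, hfin2, sq_nonneg C, hC]
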